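/- arXiv:2308.02695 — 5 statements merged into one kernel-verified Lean document; each statement's English description precedes it below -/
import Mathlib

section
/- Let (Ω, P) be a probability space with events F, Y, C, with P(C) = P(Y), e₁ = Yᶜ ∩ C, e₂ = Y ∩ Cᶜ both of positive probability, P(C) > 0 and P(Cᶜ) > 0, and suppose P(F | Yᶜ) ≠ P(F | Cᶜ). Then (P(F|Y) − P(F|C)) / (P(F|Yᶜ) − P(F|Cᶜ)) = −P(Cᶜ)/P(C). -/
open MeasureTheory

/-- Real-valued probability of an event. -/
noncomputable def pr {Ω : Type*} [MeasurableSpace Ω] (μ : Measure Ω) (s : Set Ω) : ℝ :=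
  (μ s).toReal

/-- Real-valued conditional probability P(A | B). -/
noncomputable def cpr {Ω : Type*} [MeasurableSpace Ω] (μ : Measure Ω) (A B : Set Ω) : ℝ :=
  pr μ (A ∩ B) / pr μ B

theorem stmt_5 {Ω : Type*} [MeasurableSpace Ω] (μ : Measure Ω) [IsProbabilityMeasure μ]
    (F Y C : Set Ω) (hF : MeasurableSet F) (hY : MeasurableSet Y) (hC : MeasurableSet C)
    (hcal : μ C = μ Y)
    (he1 : 0 < μ (Yᶜ ∩ C)) (he2 : 0 < μ (Y ∩ Cᶜ))
    (hCpos : 0 < μ C) (hCc : 0 < μ Cᶜ)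
    (hne : cpr μ F Yᶜ ≠ cpr μ F Cᶜ) :
    (cpr μ F Y - cpr μ F C) / (cpr μ F Yᶜ - cpr μ F Cᶜ)
      = -(pr μ Cᶜ / pr μ C) := by
  have hYc : μ Yᶜ = μ Cᶜ := by
    rw [measure_compl hY (measure_ne_top μ Y), measure_compl hC (measure_ne_top μ C), hcal]
  -- split of μ F
  have splitY : μ (F ∩ Y) + μ (F ∩ Yᶜ) = μ F := by
    have := measure_inter_add_diff F hY (μ := μ)
    rwa [Set.diff_eq] at this
  have splitC : μ (F ∩ C) + μ (F ∩ Cᶜ) = μ F := by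
    have := measure_inter_add_diff F hC (μ := μ)
    rwa [Set.diff_eq] at this
  -- to reals
  have fin : ∀ s : Set Ω, μ s ≠ ⊤ := fun s => measure_ne_top μ s
  have srY : pr μ (F ∩ Y) + pr μ (F ∩ Yᶜ) = pr μ F := by
    rw [pr, pr, pr, ← ENNReal.toReal_add (fin _) (fin _), splitY]
  have srC : pr μ (F ∩ C) + pr μ (F ∩ Cᶜ) = pr μ F := by
    rw [pr, pr, pr, ← ENNReal.toReal_add (fin _) (fin _), splitC]
  have hprYc : pr μ Yᶜ = pr μ Cᶜ := by rw [pr, pr, hYc]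
  have hprYC : pr μ Y = pr μ C := by rw [pr, pr, hcal]
  have hCpos' : 0 < pr μ C := ENNReal.toReal_pos hCpos.ne' (fin _)
  have hCc' : 0 < pr μ Cᶜ := ENNReal.toReal_pos hCc.ne' (fin _)
  have hd : pr μ (F ∩ Yᶜ) ≠ pr μ (F ∩ Cᶜ) := by
    intro h
    apply hne
    rw [cpr, cpr, h, hprYc]
  have hnum : pr μ (F ∩ Y) - pr μ (F ∩ C) = -(pr μ (F ∩ Yᶜ) - pr μ (F ∩ Cᶜ)) := by
    linarith
  rw [cpr, cpr, cpr, cpr, hprYc, hprYC]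
  rw [div_sub_div_same, div_sub_div_same, hnum]
  have hd' : pr μ (F ∩ Yᶜ) - pr μ (F ∩ Cᶜ) ≠ 0 := sub_ne_zero.mpr hd
  field_simp
end

section
/- Let (Ω, P) be a probability space, f : Ω → [0,1] measurable, t < τ, events Y, Y*, and two events C, C̃ with C̃ = Y* ∪ {f > τ}. Assume P(Yᶜ ∩ Y*) = 0, P(Y*∩ Cᶜ) = 0, and P(Y ∩ Cᶜ) = P(Y ∩ C̃ᶜ). Then P({f ≤ t} ∩ Y ∩ C̃ᶜ) ≥ P({f ≤ t} ∩ Y ∩ Cᶜ), and consequently P({f > t} ∩ Y ∩ Cᶜ) ≥ P({f > t} ∩ Y ∩ C̃ᶜ). -/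
open MeasureTheory

/-! Below the threshold `τ` the direct method cleans only observed positives, so its uncleaned
positives with score `≤ t` miss at most a null set of those of `C`. Since both methods have the
same total error on `Y`, splitting that total along `{f ≤ t}` transfers the inequality, reversed,
to the high-score region `{f > t}`. -/

open Set ENNReal

theorem setOf_le_inter_union_setOf_lt_subset {Ω : Type*} {f : Ω → ℝ} {t τ : ℝ} (htτ : t < τ)
    (N : Set Ω) :
    {ω | f ω ≤ t} ∩ (N ∪ {ω | τ < f ω}) ⊆ N := by
  rintro ω ⟨hlow, hN | hhigh⟩
  · exact hN
  · exact absurd hhigh (not_lt.mpr (hlow.trans htτ.le))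

section

variable {Ω : Type*} [MeasurableSpace Ω] {μ : Measure Ω}

theorem measure_inter_inter_compl_le_of_inter_subset {L Y C C' N : Set Ω} (hL : L ∩ C' ⊆ N)
    (hN : μ (N ∩ Cᶜ) = 0) : μ (L ∩ Y ∩ Cᶜ) ≤ μ (L ∩ Y ∩ C'ᶜ) := by
  refine measure_mono_ae (ae_le_set.mpr (measure_mono_null ?_ hN))
  rintro ω ⟨⟨⟨hωL, hωY⟩, hωC⟩, hω⟩
  have hωC' : ω ∈ C' := by_contra fun h => hω ⟨⟨hωL, hωY⟩, h⟩
  exact ⟨hL ⟨hωL, hωC'⟩, hωC⟩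

theorem measure_compl_inter_le_of_inter_le {s a b : Set Ω} (hs : MeasurableSet s)
    (ha : μ a ≠ ∞) (hab : μ a = μ b) (h : μ (s ∩ a) ≤ μ (s ∩ b)) :
    μ (sᶜ ∩ b) ≤ μ (sᶜ ∩ a) := by
  have hsplit (u : Set Ω) : μ (s ∩ u) + μ (sᶜ ∩ u) = μ u := by
    rw [inter_comm s, inter_comm sᶜ, ← sdiff_eq]
    exact measure_inter_add_sdiff u hs
  have hfin : μ (s ∩ a) ≠ ∞ := ne_top_of_le_ne_top ha (measure_mono inter_subset_right)
  refine (ENNReal.add_le_add_iff_left hfin).mp ?_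
  calc μ (s ∩ a) + μ (sᶜ ∩ b) ≤ μ (s ∩ b) + μ (sᶜ ∩ b) := add_le_add_left h _
    _ = μ (s ∩ a) + μ (sᶜ ∩ a) := by rw [hsplit, hsplit, hab]

end

theorem stmt_10_general {Ω : Type*} [MeasurableSpace Ω] (μ : Measure Ω) [IsProbabilityMeasure μ]
    (f : Ω → ℝ) (hf : Measurable f)
    (t τ : ℝ) (htτ : t < τ)
    (Y Ystar C : Set Ω)
    (Ctil : Set Ω) (hCtil : Ctil = Ystar ∪ {ω | τ < f ω})
    (hnoflip : μ (Ystar ∩ Cᶜ) = 0)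
    (herr : μ (Y ∩ Cᶜ) = μ (Y ∩ Ctilᶜ)) :
    μ ({ω | f ω ≤ t} ∩ Y ∩ Ctilᶜ) ≥ μ ({ω | f ω ≤ t} ∩ Y ∩ Cᶜ) ∧
      μ ({ω | t < f ω} ∩ Y ∩ Cᶜ) ≥ μ ({ω | t < f ω} ∩ Y ∩ Ctilᶜ) := by
  have hlow : μ ({ω | f ω ≤ t} ∩ Y ∩ Cᶜ) ≤ μ ({ω | f ω ≤ t} ∩ Y ∩ Ctilᶜ) :=
    measure_inter_inter_compl_le_of_inter_subset
      (hCtil ▸ setOf_le_inter_union_setOf_lt_subset htτ Ystar) hnoflip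
  refine ⟨hlow, ?_⟩
  have hhigh : {ω | t < f ω} = {ω | f ω ≤ t}ᶜ := by
    ext
    simp
  simp only [hhigh, inter_assoc] at hlow ⊢
  exact measure_compl_inter_le_of_inter_le (measurableSet_le hf measurable_const)
    (measure_ne_top μ _) herr hlow

theorem stmt_10 {Ω : Type*} [MeasurableSpace Ω] (μ : Measure Ω) [IsProbabilityMeasure μ]
    (f : Ω → ℝ) (hf : Measurable f) (hrange : ∀ ω, f ω ∈ Set.Icc (0 : ℝ) 1)
    (t τ : ℝ) (htτ : t < τ)
    (Y Ystar C : Set Ω) (hY : MeasurableSet Y) (hYs : MeasurableSet Ystar)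
    (hC : MeasurableSet C)
    (Ctil : Set Ω) (hCtil : Ctil = Ystar ∪ {ω | τ < f ω})
    (hcc : μ (Yᶜ ∩ Ystar) = 0)
    (hnoflip : μ (Ystar ∩ Cᶜ) = 0)
    (herr : μ (Y ∩ Cᶜ) = μ (Y ∩ Ctilᶜ)) :
    μ ({ω | f ω ≤ t} ∩ Y ∩ Ctilᶜ) ≥ μ ({ω | f ω ≤ t} ∩ Y ∩ Cᶜ) ∧
      μ ({ω | t < f ω} ∩ Y ∩ Cᶜ) ≥ μ ({ω | t < f ω} ∩ Y ∩ Ctilᶜ) :=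
  stmt_10_general μ f hf t τ htτ Y Ystar C Ctil hCtil hnoflip herr
end

section
/- Let (Ω, P) be a probability space, f : Ω → [0,1] measurable, τ, t reals, Y, Y* events, and C̃ = Y* ∪ {f > τ}. Assume P(Yᶜ ∩ Y*) = 0, P(Yᶜ) > 0, P(C̃ᶜ) > 0, and P(C̃) = P(Y). Then P({f > t} | Yᶜ) − P({f > t} | C̃ᶜ) ≥ 0. -/
open MeasureTheory

theorem stmt_11 {Ω : Type*} [MeasurableSpace Ω] (μ : Measure Ω) [IsProbabilityMeasure μ]
    (f : Ω → ℝ) (hf : Measurable f) (hrange : ∀ ω, f ω ∈ Set.Icc (0 : ℝ) 1)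
    (t τ : ℝ)
    (Y Ystar : Set Ω) (hY : MeasurableSet Y) (hYs : MeasurableSet Ystar)
    (Ctil : Set Ω) (hCtil : Ctil = Ystar ∪ {ω | τ < f ω})
    (hcc : μ (Yᶜ ∩ Ystar) = 0)
    (hYc : 0 < μ Yᶜ) (hCc : 0 < μ Ctilᶜ)
    (hcal : μ Ctil = μ Y) :
    cpr μ {ω | t < f ω} Yᶜ - cpr μ {ω | t < f ω} Ctilᶜ ≥ 0 := by
  set F : Set Ω := {ω | t < f ω} with hF
  have hFm : MeasurableSet F := measurableSet_lt measurable_const hf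
  have hTm : MeasurableSet {ω | τ < f ω} := measurableSet_lt measurable_const hf
  have hCm : MeasurableSet Ctil := hCtil ▸ hYs.union hTm
  -- denominators equal
  have hdenom : μ Yᶜ = μ Ctilᶜ := by
    rw [measure_compl hY (measure_ne_top μ Y), measure_compl hCm (measure_ne_top μ Ctil), hcal]
  -- key: μ (Yᶜ ∩ Ctil) = μ (Y ∩ Ctilᶜ)
  have hsplit1 : μ Ctil = μ (Ctil ∩ Y) + μ (Ctil ∩ Yᶜ) := (measure_inter_add_diff Ctil hY).symm
  have hsplit2 : μ Y = μ (Y ∩ Ctil) + μ (Y ∩ Ctilᶜ) := (measure_inter_add_diff Y hCm).symm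
  have hswap : μ (Ctil ∩ Yᶜ) = μ (Y ∩ Ctilᶜ) := by
    have h1 : μ (Ctil ∩ Y) + μ (Ctil ∩ Yᶜ) = μ (Y ∩ Ctil) + μ (Y ∩ Ctilᶜ) := by
      rw [← hsplit1, ← hsplit2, hcal]
    rw [Set.inter_comm Ctil Y] at h1
    exact (ENNReal.add_right_inj (measure_ne_top μ (Y ∩ Ctil))).1 h1
  -- numerator inequality
  have hnum : μ (F ∩ Ctilᶜ) ≤ μ (F ∩ Yᶜ) := by
    by_cases ht : τ ≤ t
    · have : F ∩ Ctilᶜ = ∅ := by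
        ext ω
        simp only [Set.mem_inter_iff, Set.mem_empty_iff_false, iff_false, not_and]
        intro hωF hωC
        exact hωC (hCtil ▸ Set.mem_union_right _ (lt_of_le_of_lt ht hωF))
      rw [this, measure_empty]
      exact zero_le
    · push_neg at ht
      -- t < τ, so {f > τ} ⊆ F
      have hsub : {ω | τ < f ω} ⊆ F := fun ω hω => lt_trans ht hω
      have e1 : μ (F ∩ Ctilᶜ) = μ (F ∩ Ctilᶜ ∩ Y) + μ (F ∩ Ctilᶜ ∩ Yᶜ) :=
        (measure_inter_add_diff (F ∩ Ctilᶜ) hY).symm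
      have e2 : μ (F ∩ Yᶜ) = μ (F ∩ Yᶜ ∩ Ctil) + μ (F ∩ Yᶜ ∩ Ctilᶜ) :=
        (measure_inter_add_diff (F ∩ Yᶜ) hCm).symm
      have hsame : μ (F ∩ Ctilᶜ ∩ Yᶜ) = μ (F ∩ Yᶜ ∩ Ctilᶜ) := by
        rw [Set.inter_assoc, Set.inter_comm Ctilᶜ, ← Set.inter_assoc]
      have hkey : μ (F ∩ Ctilᶜ ∩ Y) ≤ μ (F ∩ Yᶜ ∩ Ctil) := by
        have h1 : μ (F ∩ Ctilᶜ ∩ Y) ≤ μ (Y ∩ Ctilᶜ) := by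
          apply measure_mono; intro ω ⟨⟨_, h2⟩, h3⟩; exact ⟨h3, h2⟩
        have h2 : μ (Y ∩ Ctilᶜ) = μ (Ctil ∩ Yᶜ) := hswap.symm
        have h3 : μ (Ctil ∩ Yᶜ) ≤ μ (Yᶜ ∩ {ω | τ < f ω}) := by
          have hdecomp : Ctil ∩ Yᶜ ⊆ (Yᶜ ∩ Ystar) ∪ (Yᶜ ∩ {ω | τ < f ω}) := by
            rw [hCtil]; intro ω ⟨h4, h5⟩
            rcases h4 with h4 | h4
            · exact Or.inl ⟨h5, h4⟩
            · exact Or.inr ⟨h5, h4⟩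
          calc μ (Ctil ∩ Yᶜ) ≤ μ ((Yᶜ ∩ Ystar) ∪ (Yᶜ ∩ {ω | τ < f ω})) := measure_mono hdecomp
            _ ≤ μ (Yᶜ ∩ Ystar) + μ (Yᶜ ∩ {ω | τ < f ω}) := measure_union_le _ _
            _ = μ (Yᶜ ∩ {ω | τ < f ω}) := by rw [hcc, zero_add]
        have h4 : μ (Yᶜ ∩ {ω | τ < f ω}) ≤ μ (F ∩ Yᶜ ∩ Ctil) := by
          apply measure_mono; intro ω ⟨h5, h6⟩
          exact ⟨⟨hsub h6, h5⟩, hCtil ▸ Or.inr h6⟩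
        exact le_trans h1 (le_trans (le_of_eq h2) (le_trans h3 h4))
      rw [e1, e2, hsame]
      exact add_le_add_left hkey _
  -- conclude
  have hprYc : pr μ Yᶜ = pr μ Ctilᶜ := by unfold pr; rw [hdenom]
  have hpos : 0 < pr μ Yᶜ := by
    unfold pr; exact ENNReal.toReal_pos hYc.ne' (measure_ne_top μ _)
  have hnum' : pr μ (F ∩ Ctilᶜ) ≤ pr μ (F ∩ Yᶜ) :=
    ENNReal.toReal_mono (measure_ne_top μ _) hnum
  unfold cpr
  rw [ge_iff_le, sub_nonneg, ← hprYc]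
  gcongr
end

section
/- Let (Ω, P) be a probability space, f : Ω → [0,1] measurable, t < τ, events Y, Y*, C̃ = Y* ∪ {f > τ}, and C any event. Assume: P(Yᶜ ∩ Y*) = 0; P(Y* ∩ Cᶜ) = 0 and P(Y* ∩ C̃ᶜ) = 0; P(C) = P(Y) = P(C̃); P(Yᶜ ∩ C) = P(Yᶜ ∩ C̃) (equal type-1 error); P(Yᶜ) > 0, P(Cᶜ) > 0, P(C̃ᶜ) > 0; and P(Y ∩ Cᶜ) > 0, P(Y ∩ C̃ᶜ) > 0. Then P({f > t} | Yᶜ) − P({f > t} | Cᶜ) ≤ P({f > t} | Yᶜ) − P({f > t} | C̃ᶜ). -/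
open MeasureTheory

section

variable {Ω : Type*} [MeasurableSpace Ω] {μ : Measure Ω} [IsFiniteMeasure μ]

theorem pr_inter_eq_sub {A : Set Ω} (hA : MeasurableSet A) (s : Set Ω) :
    pr μ (A ∩ s) = pr μ s - pr μ (Aᶜ ∩ s) := by
  have h := measureReal_inter_add_sdiff (μ := μ) (s := s) hA
  rw [Set.sdiff_eq, Set.inter_comm s Aᶜ, Set.inter_comm s A] at h
  simp only [pr, ← measureReal_def]
  linarith

theorem cpr_le_cpr_of_compl_inter_le {A s s' : Set Ω} (hA : MeasurableSet A)
    (hs : μ s = μ s') (h : μ (Aᶜ ∩ s) ≤ μ (Aᶜ ∩ s')) :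
    cpr μ A s' ≤ cpr μ A s := by
  have hpr : pr μ (Aᶜ ∩ s) ≤ pr μ (Aᶜ ∩ s') := ENNReal.toReal_mono (measure_ne_top _ _) h
  rw [cpr, cpr, pr_inter_eq_sub hA s, pr_inter_eq_sub hA s',
    show pr μ s = pr μ s' from congrArg ENNReal.toReal hs]
  gcongr
  exact ENNReal.toReal_nonneg

end

theorem stmt_12_general {Ω : Type*} [MeasurableSpace Ω] (μ : Measure Ω) [IsProbabilityMeasure μ]
    (f : Ω → ℝ) (hf : Measurable f)
    (t τ : ℝ) (htτ : t < τ)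
    (Y Ystar C : Set Ω) (hYs : MeasurableSet Ystar)
    (hC : MeasurableSet C)
    (Ctil : Set Ω) (hCtil : Ctil = Ystar ∪ {ω | τ < f ω})
    (hnoflipC : μ (Ystar ∩ Cᶜ) = 0)
    (hcalC : μ C = μ Y) (hcalCtil : μ Ctil = μ Y) :
    cpr μ {ω | t < f ω} Yᶜ - cpr μ {ω | t < f ω} Cᶜ
      ≤ cpr μ {ω | t < f ω} Yᶜ - cpr μ {ω | t < f ω} Ctilᶜ := by
  set F : Set Ω := {ω | t < f ω}
  have hF : MeasurableSet F := measurableSet_lt measurable_const hf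
  have hCtil_meas : MeasurableSet Ctil := hCtil ▸ hYs.union (measurableSet_lt measurable_const hf)
  have hcompl : μ Cᶜ = μ Ctilᶜ := by
    rw [measure_compl hC (measure_ne_top _ _), measure_compl hCtil_meas (measure_ne_top _ _),
      hcalC, hcalCtil]
  have hkept : (Fᶜ ∩ Cᶜ) \ (Fᶜ ∩ Ctilᶜ) ⊆ Ystar ∩ Cᶜ := by
    rintro ω ⟨⟨hωF, hωC⟩, hω⟩
    refine ⟨by_contra fun hωY ↦ hω ⟨hωF, ?_⟩, hωC⟩
    rw [hCtil]
    rintro (hY | hτ)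
    exacts [hωY hY, hωF (htτ.trans hτ)]
  have hneg : μ (Fᶜ ∩ Cᶜ) ≤ μ (Fᶜ ∩ Ctilᶜ) :=
    measure_mono_ae (ae_le_set.2 (measure_mono_null hkept hnoflipC))
  exact sub_le_sub_left (cpr_le_cpr_of_compl_inter_le hF hcompl hneg) _

theorem stmt_12 {Ω : Type*} [MeasurableSpace Ω] (μ : Measure Ω) [IsProbabilityMeasure μ]
    (f : Ω → ℝ) (hf : Measurable f) (hrange : ∀ ω, f ω ∈ Set.Icc (0 : ℝ) 1)
    (t τ : ℝ) (htτ : t < τ)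
    (Y Ystar C : Set Ω) (hY : MeasurableSet Y) (hYs : MeasurableSet Ystar)
    (hC : MeasurableSet C)
    (Ctil : Set Ω) (hCtil : Ctil = Ystar ∪ {ω | τ < f ω})
    (hcc : μ (Yᶜ ∩ Ystar) = 0)
    (hnoflipC : μ (Ystar ∩ Cᶜ) = 0) (hnoflipCtil : μ (Ystar ∩ Ctilᶜ) = 0)
    (hcalC : μ C = μ Y) (hcalCtil : μ Ctil = μ Y)
    (herr1 : μ (Yᶜ ∩ C) = μ (Yᶜ ∩ Ctil))
    (hYc : 0 < μ Yᶜ) (hCc : 0 < μ Cᶜ) (hCtilc : 0 < μ Ctilᶜ)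
    (he2C : 0 < μ (Y ∩ Cᶜ)) (he2Ctil : 0 < μ (Y ∩ Ctilᶜ)) :
    cpr μ {ω | t < f ω} Yᶜ - cpr μ {ω | t < f ω} Cᶜ
      ≤ cpr μ {ω | t < f ω} Yᶜ - cpr μ {ω | t < f ω} Ctilᶜ :=
  stmt_12_general μ f hf t τ htτ Y Ystar C hYs hC Ctil hCtil hnoflipC hcalC hcalCtil
end

section
/- Let (Ω, P) be a probability space, F, Y, C events with P(C) = P(Y), P(Yᶜ) > 0, P(Cᶜ) > 0, P(Y) > 0, P(C) > 0. If F is independent of e₁ = Yᶜ ∩ C and of e₂ = Y ∩ Cᶜ, and P(e₁) = P(e₂) > 0, then P(F | Yᶜ) = P(F | Cᶜ) and P(F | Y) = P(F | C). -/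
open MeasureTheory

theorem stmt_14 {Ω : Type*} [MeasurableSpace Ω] (μ : Measure Ω) [IsProbabilityMeasure μ]
    (F Y C : Set Ω) (hF : MeasurableSet F) (hY : MeasurableSet Y) (hC : MeasurableSet C)
    (hcal : μ C = μ Y)
    (hYc : 0 < μ Yᶜ) (hCc : 0 < μ Cᶜ) (hYpos : 0 < μ Y) (hCpos : 0 < μ C)
    (hind1 : μ (F ∩ (Yᶜ ∩ C)) = μ F * μ (Yᶜ ∩ C))
    (hind2 : μ (F ∩ (Y ∩ Cᶜ)) = μ F * μ (Y ∩ Cᶜ))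
    (heq : μ (Yᶜ ∩ C) = μ (Y ∩ Cᶜ)) (hepos : 0 < μ (Yᶜ ∩ C)) :
    cpr μ F Yᶜ = cpr μ F Cᶜ ∧ cpr μ F Y = cpr μ F C := by
  have key : μ (F ∩ (Yᶜ ∩ C)) = μ (F ∩ (Y ∩ Cᶜ)) := by rw [hind1, hind2, heq]
  have split : ∀ A B : Set Ω, MeasurableSet B →
      μ (F ∩ A) = μ (F ∩ (A ∩ B)) + μ (F ∩ (A ∩ Bᶜ)) := by
    intro A B hB
    rw [← measure_inter_add_diff (F ∩ A) hB]
    congr 1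
    · rw [Set.inter_assoc]
    · rw [Set.diff_eq, Set.inter_assoc]
  have h1 : μ (F ∩ Yᶜ) = μ (F ∩ Cᶜ) := by
    rw [split Yᶜ C hC, split Cᶜ Y hY, key]
    have e1 : Yᶜ ∩ Cᶜ = Cᶜ ∩ Yᶜ := Set.inter_comm _ _
    have e2 : Cᶜ ∩ Y = Y ∩ Cᶜ := Set.inter_comm _ _
    rw [e1, e2, add_comm]
  have h2 : μ (F ∩ Y) = μ (F ∩ C) := by
    rw [split Y C hC, split C Y hY, ← key]
    have e1 : C ∩ Y = Y ∩ C := Set.inter_comm _ _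
    have e2 : C ∩ Yᶜ = Yᶜ ∩ C := Set.inter_comm _ _
    rw [e1, e2]
  have hcY : μ Yᶜ = μ Cᶜ := by
    rw [prob_compl_eq_one_sub hY, prob_compl_eq_one_sub hC, hcal]
  constructor
  · unfold cpr pr; rw [h1, hcY]
  · unfold cpr pr; rw [h2, hcal]
end
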